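/- arXiv:0709.2466 — 3 statements merged into one kernel-verified Lean document; each statement's English description precedes it below -/
import Mathlib

section
/- Let F be an n×n quaternion matrix that is block upper triangular with respect to a partition (n₁,…,n_s), with diagonal blocks F_{ii} = λ_i·I_{n_i} where λ₁ ≥ ⋯ ≥ λ_s are real, and such that whenever λ_i = λ_{i+1} the superdiagonal block F_{i,i+1} is an n_i×n_{i+1} upper triangular matrix (with n_i ≥ n_{i+1}) whose diagonal entries are positive real numbers. Let V be a quaternion unitary matrix. Then F′ = V*FV is block upper triangular with respect to (n₁,…,n_s) with the same diagonal blocks F′_{ii} = λ_i·I_{n_i} (with no conditions imposed on its off-diagonal blocks) if and only if V = V₁ ⊕ V₂ ⊕ ⋯ ⊕ V_s is block diagonal, where each V_i is an n_i×n_i (unitary) quaternion matrix. -/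
open Matrix
open scoped Quaternion

noncomputable section

/-- A quaternion matrix `U` is unitary if `Uᴴ * U = 1`. -/
def IsUnitaryM {m : Type*} [Fintype m] [DecidableEq m] (U : Matrix m m ℍ[ℝ]) : Prop :=
  Uᴴ * U = 1

/-- `A` and `B` are unitarily similar if `A = Uᴴ * B * U` for some unitary `U`. -/
def UnitarilySimilar {m : Type*} [Fintype m] [DecidableEq m] (A B : Matrix m m ℍ[ℝ]) : Prop :=
  ∃ U : Matrix m m ℍ[ℝ], IsUnitaryM U ∧ A = Uᴴ * B * U

/-- `λ ∈ ℍ` is a right eigenvalue of `A`: `A v = v λ` for some nonzero `v`. -/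
def IsRightEigenvalue {n : ℕ} (A : Matrix (Fin n) (Fin n) ℍ[ℝ]) (lam : ℍ[ℝ]) : Prop :=
  ∃ v : Fin n → ℍ[ℝ], v ≠ 0 ∧ A.mulVec v = fun i => v i * lam

/-- All right eigenvalues of `A` are real. -/
def HasRealSpectrum {n : ℕ} (A : Matrix (Fin n) (Fin n) ℍ[ℝ]) : Prop :=
  ∀ lam : ℍ[ℝ], IsRightEigenvalue A lam → ∃ r : ℝ, lam = (r : ℍ[ℝ])

/-- `psum sz m` is the sum of the first `m` block sizes: the starting index of block `m`. -/
def psum {s : ℕ} (sz : Fin s → ℕ) (m : ℕ) : ℕ :=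
  ∑ t ∈ Finset.range m, if h : t < s then sz ⟨t, h⟩ else 0

/-- Row/column index `r` belongs to the `i`-th diagonal block of the partition `sz`. -/
def InBlock {s : ℕ} (sz : Fin s → ℕ) (i : Fin s) (r : ℕ) : Prop :=
  psum sz i ≤ r ∧ r < psum sz ((i : ℕ) + 1)

/-- The strengthened Schur form (for real eigenvalues): block upper triangular w.r.t. the
partition `sz` with `s` diagonal blocks `lam i • I`, `lam` nonincreasing, and whenever two
consecutive eigenvalues coincide the block sizes do not increase and the superdiagonal block
is upper triangular with positive real diagonal entries. -/
def StrengthenedSchurForm {n : ℕ} (s : ℕ) (sz : Fin s → ℕ) (lam : Fin s → ℝ)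
    (F : Matrix (Fin n) (Fin n) ℍ[ℝ]) : Prop :=
  (∀ i, 0 < sz i) ∧ (∑ i, sz i) = n ∧
  (∀ i j : Fin s, i ≤ j → lam j ≤ lam i) ∧
  (∀ (r c : Fin n) (i j : Fin s), InBlock sz i r → InBlock sz j c → j < i → F r c = 0) ∧
  (∀ (r c : Fin n) (i : Fin s), InBlock sz i r → InBlock sz i c →
      F r c = if r = c then (lam i : ℍ[ℝ]) else 0) ∧
  (∀ (i : Fin s) (h : (i : ℕ) + 1 < s), lam i = lam ⟨(i : ℕ) + 1, h⟩ →
      sz ⟨(i : ℕ) + 1, h⟩ ≤ sz i ∧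
      ∀ r c : Fin n, InBlock sz i r → InBlock sz ⟨(i : ℕ) + 1, h⟩ c →
        ((c : ℕ) - psum sz ((i : ℕ) + 1) < (r : ℕ) - psum sz i → F r c = 0) ∧
        ((c : ℕ) - psum sz ((i : ℕ) + 1) = (r : ℕ) - psum sz i →
          ∃ b : ℝ, 0 < b ∧ F r c = (b : ℍ[ℝ])))

/-! If `V` is block diagonal, `Vᴴ F V` is computed block by block. Conversely `F V = V F'`, where
`F` and `F' = Vᴴ F V` are both block upper triangular with diagonal blocks `λ_i I`; so, inductively
over the column blocks, a column `v` of `V` from block `j` satisfies `(F v)_r = λ_j v_r` on all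
rows of blocks `≥ j`. Descending through the blocks `k > j`, block row `k` gives
`(λ_k - λ_j) v_k = 0`. When `λ_k = λ_j`, monotonicity gives `λ_{k-1} = λ_j` too, and block row
`k - 1` gives `F_{k-1,k} v_k = 0`, which forces `v_k = 0` because `F_{k-1,k}` is upper triangular
with positive diagonal. Hence `V` is block upper triangular, and a block upper triangular unitary
matrix is block diagonal: the rows of the leading blocks have the same total squared norm as
their columns. -/

section BlockSchur

variable {m κ : Type*} [Fintype m] [DecidableEq m] [LinearOrder κ]

def IsBlockSchur (b : m → κ) (lam : κ → ℝ) (A : Matrix m m ℍ[ℝ]) : Prop :=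
  A.BlockTriangular b ∧ ∀ r c, b r = b c → A r c = if r = c then (lam (b r) : ℍ[ℝ]) else 0

variable {b : m → κ} {lam : κ → ℝ}

theorem IsBlockSchur.mulVec_apply {A : Matrix m m ℍ[ℝ]} (hA : IsBlockSchur b lam A)
    (v : m → ℍ[ℝ]) (r : m) :
    (A *ᵥ v) r = lam (b r) * v r + ∑ x ∈ Finset.univ.filter (fun x => b r < b x), A r x * v x := by
  rw [mulVec, dotProduct, ← Finset.sum_filter_not_add_sum_filter _ (fun x => b r < b x)]
  congr 1
  rw [Finset.sum_eq_single_of_mem r (by simp), hA.2 r r rfl, if_pos rfl]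
  intro x hx hxr
  rcases (not_lt.mp (Finset.mem_filter.mp hx).2).lt_or_eq with h | h
  · rw [hA.1 h, zero_mul]
  · rw [hA.2 r x h.symm, if_neg (Ne.symm hxr), zero_mul]

theorem IsBlockSchur.mul_apply_right {G : Matrix m m ℍ[ℝ]} (hG : IsBlockSchur b lam G)
    (V : Matrix m m ℍ[ℝ]) (r c : m) :
    (V * G) r c = (∑ x ∈ Finset.univ.filter (fun x => b x < b c), V r x * G x c) +
      V r c * lam (b c) := by
  rw [mul_apply, ← Finset.sum_filter_add_sum_filter_not _ (fun x => b x < b c)]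
  congr 1
  rw [Finset.sum_eq_single_of_mem c (by simp), hG.2 c c rfl, if_pos rfl]
  intro x hx hxc
  rcases (not_lt.mp (Finset.mem_filter.mp hx).2).lt_or_eq with h | h
  · rw [hG.1 h, mul_zero]
  · rw [hG.2 x c h.symm, if_neg hxc, mul_zero]

theorem IsBlockSchur.conjTranspose_mul_mul {F V : Matrix m m ℍ[ℝ]} (hF : IsBlockSchur b lam F)
    (hV : ∀ r c, b r ≠ b c → V r c = 0) (hunit : Vᴴ * V = 1) :
    IsBlockSchur b lam (Vᴴ * F * V) := by
  have hFV : ∀ x c, b c ≤ b x → (F * V) x c = V x c * lam (b c) := by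
    intro x c hcx
    have hcol := hF.mulVec_apply (fun y => V y c) x
    rw [Finset.sum_eq_zero fun y hy => by
      rw [hV y c (((Finset.mem_filter.mp hy).2.trans_le' hcx).ne'), mul_zero], add_zero] at hcol
    rcases hcx.lt_or_eq with h | h
    · rw [mul_apply, ← dotProduct, ← mulVec, hcol, hV x c h.ne', mul_zero, zero_mul]
    · rw [mul_apply, ← dotProduct, ← mulVec, hcol, h, Quaternion.coe_commutes]
  have key : ∀ r c, b c ≤ b r → (Vᴴ * F * V) r c = (1 : Matrix m m ℍ[ℝ]) r c * lam (b c) := by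
    intro r c hcr
    rw [← hunit, Matrix.mul_assoc, mul_apply, mul_apply, Finset.sum_mul]
    refine Finset.sum_congr rfl fun x _ => ?_
    by_cases hx : b x = b r
    · rw [hFV x c (hx ▸ hcr), mul_assoc]
    · rw [conjTranspose_apply, hV x r hx, star_zero, zero_mul, zero_mul, zero_mul]
  refine ⟨fun r c h => ?_, fun r c h => ?_⟩
  · rw [key r c h.le, one_apply_ne (fun hrc => h.ne (congrArg b hrc.symm)), zero_mul]
  · rw [key r c h.ge, one_apply, h]
    split_ifs <;> simp

end BlockSchur

theorem sum_normSq_eq_one_of_mul_conjTranspose_eq_one {m n : Type*} [Fintype m] [Fintype n]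
    [DecidableEq m] {V : Matrix m n ℍ[ℝ]} (hV : V * Vᴴ = 1) (r : m) :
    ∑ c, Quaternion.normSq (V r c) = 1 := by
  have h := congrFun (congrFun hV r) r
  rw [mul_apply, one_apply_eq] at h
  simp_rw [conjTranspose_apply, Quaternion.self_mul_star, ← Quaternion.algebraMap_def,
    ← map_sum] at h
  exact (algebraMap ℝ ℍ[ℝ]).injective (by rw [h, map_one])

theorem Matrix.BlockTriangular.eq_zero_of_unitary {m κ : Type*} [Fintype m] [DecidableEq m]
    [LinearOrder κ] {b : m → κ} {V : Matrix m m ℍ[ℝ]} (hV : V.BlockTriangular b)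
    (hunit : Vᴴ * V = 1) {r c : m} (hrc : b r < b c) : V r c = 0 := by
  set N : m → m → ℝ := fun x y => Quaternion.normSq (V x y)
  set S := Finset.univ.filter fun x => b x ≤ b r
  have hrows : ∑ x ∈ S, ∑ y, N x y = S.card := by
    simp [N, sum_normSq_eq_one_of_mul_conjTranspose_eq_one (mul_eq_one_comm.mp hunit)]
  have hcols : ∑ y ∈ S, ∑ x ∈ S, N x y = S.card := by
    have hV' : Vᴴ * Vᴴᴴ = 1 := by rwa [conjTranspose_conjTranspose]
    have hcol : ∀ y ∈ S, ∑ x ∈ S, N x y = 1 := fun y hy => by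
      rw [Finset.sum_subset (Finset.subset_univ S) fun x _ hx => ?_]
      · simpa [N] using sum_normSq_eq_one_of_mul_conjTranspose_eq_one hV' y
      · simp only [S, Finset.mem_filter, Finset.mem_univ, true_and, not_le] at hy hx
        simp [N, hV (hy.trans_lt hx)]
    simp [Finset.sum_congr rfl hcol]
  have hout : ∑ x ∈ S, ∑ y ∈ Sᶜ, N x y = 0 := by
    simp_rw [← Finset.sum_add_sum_compl S (N _)] at hrows
    rw [Finset.sum_add_distrib, Finset.sum_comm, hcols] at hrows
    linarith
  have hnonneg : ∀ x y, 0 ≤ N x y := fun x y => Quaternion.normSq_nonneg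
  have hrow := (Finset.sum_eq_zero_iff_of_nonneg fun x _ =>
    Finset.sum_nonneg fun y _ => hnonneg x y).mp hout r (by simp [S])
  exact Quaternion.normSq_eq_zero.mp <|
    (Finset.sum_eq_zero_iff_of_nonneg fun y _ => hnonneg r y).mp hrow c (by simp [S, hrc])

theorem eq_zero_of_triangular_sum_eq_zero {ι R : Type*} [LinearOrder ι] [WellFoundedGT ι] [Ring R]
    [NoZeroDivisors R] {C : Finset ι} {A : ι → ι → R} {v : ι → R}
    (htri : ∀ x ∈ C, ∀ y ∈ C, y < x → A x y = 0) (hdiag : ∀ x ∈ C, A x x ≠ 0)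
    (hsum : ∀ x ∈ C, ∑ y ∈ C, A x y * v y = 0) (x : ι) (hx : x ∈ C) : v x = 0 := by
  induction x using WellFoundedGT.induction with
  | _ x ih =>
    have h := hsum x hx
    rw [Finset.sum_eq_single_of_mem x hx fun y hy hyx => ?_] at h
    · exact (mul_eq_zero.mp h).resolve_left (hdiag x hx)
    · rcases hyx.lt_or_gt with hlt | hgt
      · rw [htri x hx y hy hlt, zero_mul]
      · rw [ih y hgt hy, mul_zero]

section Partition

variable {s : ℕ} {sz : Fin s → ℕ}

theorem psum_mono (sz : Fin s → ℕ) : Monotone (psum sz) := fun _ _ h =>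
  Finset.sum_le_sum_of_subset (Finset.range_subset_range.mpr h)

theorem psum_succ (sz : Fin s → ℕ) (i : Fin s) : psum sz (i + 1) = psum sz i + sz i := by
  rw [psum, psum, Finset.sum_range_succ, dif_pos i.isLt]

theorem psum_of_le {m : ℕ} (h : s ≤ m) : psum sz (m + 1) = psum sz m := by
  rw [psum, psum, Finset.sum_range_succ, dif_neg (by omega), add_zero]

theorem psum_self : psum sz s = ∑ i, sz i := by
  rw [psum, ← Fin.sum_univ_eq_sum_range (fun t => if h : t < s then sz ⟨t, h⟩ else 0) s]
  simp

theorem exists_inBlock_of_lt_psum {m r : ℕ} (hr : r < psum sz m) : ∃ i, InBlock sz i r := by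
  induction m with
  | zero => simp [psum] at hr
  | succ m ih =>
    by_cases h : r < psum sz m
    · exact ih h
    · by_cases hm : m < s
      · exact ⟨⟨m, hm⟩, not_lt.mp h, hr⟩
      · rw [psum_of_le (not_lt.mp hm)] at hr
        exact absurd hr h

theorem InBlock.unique {i j : Fin s} {r : ℕ} (hi : InBlock sz i r) (hj : InBlock sz j r) :
    i = j := by
  by_contra hne
  wlog hlt : i < j generalizing i j
  · exact this hj hi (Ne.symm hne) (lt_of_le_of_ne (not_lt.mp hlt) (Ne.symm hne))
  have := psum_mono sz (Nat.succ_le_of_lt hlt)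
  exact absurd (hi.2.trans_le this) (not_lt.mpr hj.1)

theorem exists_forall_inBlock {n : ℕ} (h : ∑ i, sz i = n) :
    ∃ blk : Fin n → Fin s, ∀ r : Fin n, InBlock sz (blk r) r := by
  choose blk hblk using fun r : Fin n =>
    exists_inBlock_of_lt_psum (sz := sz) (m := s) (by rw [psum_self, h]; exact r.2)
  exact ⟨blk, hblk⟩

end Partition

def Fin.truncSub {n : ℕ} (x : Fin n) (k : ℕ) : Fin n := ⟨x - k, (Nat.sub_le _ _).trans_lt x.2⟩

namespace StrengthenedSchurForm

variable {n s : ℕ} {sz : Fin s → ℕ} {lam : Fin s → ℝ} {F : Matrix (Fin n) (Fin n) ℍ[ℝ]}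
  {blk : Fin n → Fin s}

theorem isBlockSchur (hF : StrengthenedSchurForm s sz lam F)
    (hblk : ∀ r, InBlock sz (blk r) r) : IsBlockSchur blk lam F :=
  ⟨fun r c h => hF.2.2.2.1 r c _ _ (hblk r) (hblk c) h,
    fun r c h => hF.2.2.2.2.1 r c _ (hblk r) (h ▸ hblk c)⟩

/-- Row `x - n_i` of block `i` has the same offset as column `x` of block `i + 1`. -/
theorem superdiag_entries (hF : StrengthenedSchurForm s sz lam F) (hblk : ∀ r, InBlock sz (blk r) r)
    (i : Fin s) (h : (i : ℕ) + 1 < s) (heq : lam i = lam ⟨i + 1, h⟩) {x y : Fin n}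
    (hx : blk x = ⟨i + 1, h⟩) (hy : blk y = ⟨i + 1, h⟩) :
    blk (x.truncSub (sz i)) = i ∧ (y < x → F (x.truncSub (sz i)) y = 0) ∧
      F (x.truncSub (sz i)) x ≠ 0 := by
  obtain ⟨hsz, hT⟩ := hF.2.2.2.2.2 i h heq
  have hx' := hx ▸ hblk x
  have hy' := hy ▸ hblk y
  have h₁ := psum_succ sz i
  have h₂ := psum_succ sz ⟨i + 1, h⟩
  simp only [InBlock] at hx' hy' h₂
  have hrow : InBlock sz i (x.truncSub (sz i)) := by
    simp only [InBlock, Fin.truncSub]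
    omega
  refine ⟨(hblk _).unique hrow, fun hyx => (hT _ _ hrow hy').1 ?_, ?_⟩
  · simp only [Fin.truncSub, Fin.lt_def] at hyx ⊢
    omega
  · obtain ⟨b, hb, hFb⟩ := (hT _ _ hrow hx').2 (by simp only [Fin.truncSub]; omega)
    rw [hFb, Ne, ← Quaternion.coe_zero, Quaternion.coe_inj]
    exact hb.ne'

theorem eq_zero_of_mulVec_apply_eq (hF : StrengthenedSchurForm s sz lam F)
    (hblk : ∀ r, InBlock sz (blk r) r) {j : Fin s} {v : Fin n → ℍ[ℝ]}
    (hv : ∀ r, j ≤ blk r → (F *ᵥ v) r = lam j * v r) {r : Fin n} (hr : j < blk r) : v r = 0 := by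
  have hF' := hF.isBlockSchur hblk
  suffices ∀ k, j < k → ∀ r, blk r = k → v r = 0 from this _ hr r rfl
  intro k
  induction k using WellFoundedGT.induction with
  | _ k ih =>
  intro hjk r hrk
  have hvanish : ∀ x, k < blk x → v x = 0 := fun x hx => ih _ hx (hjk.trans hx) x rfl
  by_cases hlam : lam k = lam j
  · -- `λ_{k-1} = λ_k` as well, and the superdiagonal block `F_{k-1,k}` is injective on `v`
    obtain ⟨i, hi, rfl⟩ : ∃ (i : Fin s) (h : (i : ℕ) + 1 < s), k = ⟨i + 1, h⟩ := by
      have := Fin.lt_def.mp hjk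
      exact ⟨⟨k - 1, by omega⟩, by simp only; omega, Fin.ext (by simp only; omega)⟩
    have hji : j ≤ i := Fin.le_def.mpr (by have := Fin.lt_def.mp hjk; simp only at this; omega)
    have hlam_i : lam i = lam ⟨i + 1, hi⟩ :=
      le_antisymm (hlam ▸ hF.2.2.1 j i hji) (hF.2.2.1 i _ (Fin.le_def.mpr (by simp only; omega)))
    have hC : ∀ {x}, x ∈ Finset.univ.filter (fun x => blk x = ⟨i + 1, hi⟩) ↔
        blk x = ⟨i + 1, hi⟩ := by simp
    refine eq_zero_of_triangular_sum_eq_zero (A := fun x y => F (x.truncSub (sz i)) y)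
      (fun x hx y hy => (hF.superdiag_entries hblk i hi hlam_i (hC.mp hx) (hC.mp hy)).2.1)
      (fun x hx => (hF.superdiag_entries hblk i hi hlam_i (hC.mp hx) (hC.mp hx)).2.2)
      (fun x hx => ?_) r (hC.mpr hrk)
    have hrow := (hF.superdiag_entries hblk i hi hlam_i (hC.mp hx) (hC.mp hx)).1
    have hx' := hv _ (hrow ▸ hji)
    rw [hF'.mulVec_apply, hrow, hlam_i, hlam, add_eq_left] at hx'
    rwa [← Finset.sum_subset (fun y hy => ?_) (fun y hy hyC => ?_)] at hx'
    · simp only [Finset.mem_filter, Finset.mem_univ, true_and] at hy ⊢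
      rw [hy, Fin.lt_def]
      simp
    · simp only [Finset.mem_filter, Finset.mem_univ, true_and, Fin.lt_def] at hy hyC
      rw [hvanish y (Fin.lt_def.mpr (by have := Fin.val_ne_of_ne hyC; simp only at this ⊢; omega)),
        mul_zero]
  · have hrow := hv r (hrk ▸ hjk.le)
    rw [hF'.mulVec_apply, Finset.sum_eq_zero fun x hx => by
      rw [hvanish x (hrk ▸ (Finset.mem_filter.mp hx).2), mul_zero], add_zero, hrk] at hrow
    have hsub : ((lam k - lam j : ℝ) : ℍ[ℝ]) * v r = 0 := by
      rw [Quaternion.coe_sub, sub_mul, hrow, sub_self]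
    refine (mul_eq_zero.mp hsub).resolve_left ?_
    rw [← Quaternion.coe_zero, Quaternion.coe_inj]
    exact sub_ne_zero.mpr hlam

theorem blockTriangular_of_mul_eq_mul (hF : StrengthenedSchurForm s sz lam F)
    (hblk : ∀ r, InBlock sz (blk r) r) {G V : Matrix (Fin n) (Fin n) ℍ[ℝ]}
    (hG : IsBlockSchur blk lam G) (hFV : F * V = V * G) : V.BlockTriangular blk := by
  suffices ∀ j, ∀ c, blk c = j → ∀ r, j < blk r → V r c = 0 from
    fun r c h => this _ c rfl r h
  intro j
  induction j using WellFoundedLT.induction with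
  | _ j ih =>
  rintro c rfl r hr
  refine hF.eq_zero_of_mulVec_apply_eq hblk (v := fun x => V x c) (fun x hx => ?_) hr
  have hVG := hG.mul_apply_right V x c
  rw [Finset.sum_eq_zero fun y hy => by
    rw [ih _ (Finset.mem_filter.mp hy).2 y rfl x ((Finset.mem_filter.mp hy).2.trans_le hx),
      zero_mul], zero_add, ← hFV, ← Quaternion.coe_commutes] at hVG
  exact hVG

end StrengthenedSchurForm

/-- **Transformations preserving the strengthened Schur form.**
Let `F` be in strengthened Schur form and let `V` be unitary.  Then `F' = Vᴴ F V` is block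
upper triangular with the same diagonal blocks `λ_i • I_{n_i}` (with no condition on its
off-diagonal blocks) if and only if `V` is block diagonal with respect to the partition. -/
theorem strengthened_schur_stabilizer {n : ℕ} {s : ℕ} {sz : Fin s → ℕ} {lam : Fin s → ℝ}
    {F : Matrix (Fin n) (Fin n) ℍ[ℝ]} (hF : StrengthenedSchurForm s sz lam F)
    (V : Matrix (Fin n) (Fin n) ℍ[ℝ]) (hV : IsUnitaryM V) :
    ((∀ (r c : Fin n) (i j : Fin s), InBlock sz i r → InBlock sz j c → j < i →
        (Vᴴ * F * V) r c = 0) ∧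
     (∀ (r c : Fin n) (i : Fin s), InBlock sz i r → InBlock sz i c →
        (Vᴴ * F * V) r c = if r = c then (lam i : ℍ[ℝ]) else 0))
      ↔
    (∀ (r c : Fin n) (i j : Fin s), InBlock sz i r → InBlock sz j c → i ≠ j →
        V r c = 0) := by
  obtain ⟨blk, hblk⟩ := exists_forall_inBlock hF.2.1
  have hblk_eq : ∀ {r : Fin n} {i : Fin s}, InBlock sz i r → blk r = i := (hblk _).unique
  constructor
  · rintro ⟨hlow, hdiag⟩
    have hG : IsBlockSchur blk lam (Vᴴ * F * V) :=
      ⟨fun r c h => hlow r c _ _ (hblk r) (hblk c) h,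
        fun r c h => hdiag r c _ (hblk r) (h ▸ hblk c)⟩
    have hV' : V * Vᴴ = 1 := mul_eq_one_comm.mp hV
    have hFV : F * V = V * (Vᴴ * F * V) := by
      rw [← Matrix.mul_assoc, ← Matrix.mul_assoc, hV', Matrix.one_mul]
    have htri := hF.blockTriangular_of_mul_eq_mul hblk hG hFV
    intro r c i j hr hc hij
    rw [← hblk_eq hr, ← hblk_eq hc] at hij
    rcases hij.lt_or_gt with h | h
    · exact htri.eq_zero_of_unitary hV h
    · exact htri h
  · intro hbd
    have hG := (hF.isBlockSchur hblk).conjTranspose_mul_mul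
      (fun r c h => hbd r c _ _ (hblk r) (hblk c) h) hV
    refine ⟨fun r c i j hr hc h => hG.1 ?_, fun r c i hr hc => ?_⟩
    · rwa [hblk_eq hr, hblk_eq hc]
    · rw [hG.2 r c (by rw [hblk_eq hr, hblk_eq hc]), hblk_eq hr]
end
end

section
/- Let m₁ ≥ m₂ ≥ ⋯ ≥ m_k be positive integers, let s = m₁, and for 1 ≤ i ≤ s let r_i be the number of indices j with m_j ≥ i (so (r₁,…,r_s) is the conjugate partition of (m₁,…,m_k)). Then the quaternion matrix A = J_{m₁}(0) ⊕ J_{m₂}(0) ⊕ ⋯ ⊕ J_{m_k}(0) is similar over ℍ to the block matrix B that is block upper bidiagonal with respect to the partition (r₁,…,r_s): its diagonal blocks are zero blocks of sizes r₁,…,r_s, its superdiagonal blocks are G_{i,i+1} = [I_{r_{i+1}}; 0] of size r_i×r_{i+1} (identity on top, zeros below), and all other blocks are zero. -/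
/-!
Index the basis of `J_{m₁}(0) ⊕ ⋯ ⊕ J_{m_k}(0)` by the cells `(t, a)`, `a < m_t`, of the Young
diagram of `m`, and the basis of the Weyr-type matrix by the cells `(i, b)`, `b < r_i`, of the
conjugate diagram. Transposing the diagram, `(t, a) ↦ (a, t)`, matches the two index sets, and
it turns the superdiagonal step `(t, a) → (t, a + 1)` inside a Jordan block into the step
`(a, t) → (a + 1, t)` between consecutive Weyr blocks, which is exactly where `[I; 0]` has its
ones. So the two matrices coincide after this reindexing, and one may take `S = 1`.
-/

open Matrix
open scoped Quaternion

noncomputable section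

/-- The direct sum of nilpotent Jordan blocks `J_{m 0}(0) ⊕ ⋯ ⊕ J_{m (k-1)}(0)`,
indexed by the sigma type `Σ t, Fin (m t)`: entry `((t,a),(u,b))` is `1` iff `t = u` and
`b = a + 1` (ones on the superdiagonal of each block). -/
def jordanNilpotent {k : ℕ} (m : Fin k → ℕ) :
    Matrix (Σ t : Fin k, Fin (m t)) (Σ t : Fin k, Fin (m t)) ℍ[ℝ] :=
  fun x y => if x.1 = y.1 ∧ (y.2 : ℕ) = (x.2 : ℕ) + 1 then 1 else 0

/-- The block matrix `B`: zero diagonal blocks of sizes `r 0, …, r (s-1)`, superdiagonal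
blocks `G_{i,i+1} = [I_{r_{i+1}}; 0]` (identity on top, zeros below) of size
`r_i × r_{i+1}`, and all other blocks zero.  Entry `((i,a),(j,b))` is `1` iff
`j = i + 1` and `a = b`. -/
def weyrMatrix {s : ℕ} (r : Fin s → ℕ) :
    Matrix (Σ i : Fin s, Fin (r i)) (Σ i : Fin s, Fin (r i)) ℍ[ℝ] :=
  fun x y => if (y.1 : ℕ) = (x.1 : ℕ) + 1 ∧ (x.2 : ℕ) = (y.2 : ℕ) then 1 else 0

open Finset

section ConjugatePartition

variable {k : ℕ} {m : Fin k → ℕ}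

theorem lt_card_filter_lt_iff (hm : Antitone m) (t : Fin k) (a : ℕ) :
    (t : ℕ) < #{j | a < m j} ↔ a < m t := by
  constructor
  · intro ht
    by_contra! hta
    have hsub : ({j | a < m j} : Finset (Fin k)) ⊆ Iio t := by
      intro j hj
      rw [mem_filter] at hj
      rw [mem_Iio]
      by_contra! htj
      exact (hm htj).not_gt (hta.trans_lt hj.2)
    have := card_le_card hsub
    rw [Fin.card_Iio] at this
    omega
  · intro hta
    have hsub : Iic t ⊆ ({j | a < m j} : Finset (Fin k)) := fun j hj =>
      mem_filter.mpr ⟨mem_univ j, hta.trans_le (hm (mem_Iic.mp hj))⟩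
    have := card_le_card hsub
    rw [Fin.card_Iic] at this
    omega

def youngDiagramTranspose (hm : Antitone m) {s : ℕ} (hs : ∀ t, m t ≤ s) (r : Fin s → ℕ)
    (hr : ∀ i : Fin s, r i = #{j | (i : ℕ) < m j}) :
    (Σ t : Fin k, Fin (m t)) ≃ (Σ i : Fin s, Fin (r i)) where
  toFun x := ⟨⟨x.2, x.2.isLt.trans_le (hs x.1)⟩,
    ⟨x.1, hr _ ▸ (lt_card_filter_lt_iff hm x.1 x.2).mpr x.2.isLt⟩⟩
  invFun y :=
    have hy : (y.2 : ℕ) < #{j | (y.1 : ℕ) < m j} := hr y.1 ▸ y.2.isLt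
    have hyk : (y.2 : ℕ) < k := hy.trans_le ((card_le_univ _).trans_eq (Fintype.card_fin k))
    ⟨⟨y.2, hyk⟩, ⟨y.1, (lt_card_filter_lt_iff hm ⟨y.2, hyk⟩ y.1).mp hy⟩⟩
  left_inv _ := rfl
  right_inv _ := rfl

theorem weyrMatrix_submatrix_youngDiagramTranspose (hm : Antitone m) {s : ℕ}
    (hs : ∀ t, m t ≤ s) (r : Fin s → ℕ) (hr : ∀ i : Fin s, r i = #{j | (i : ℕ) < m j}) :
    (weyrMatrix r).submatrix (youngDiagramTranspose hm hs r hr)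
      (youngDiagramTranspose hm hs r hr) = jordanNilpotent m := by
  funext x y
  simp only [weyrMatrix, jordanNilpotent, submatrix_apply, youngDiagramTranspose,
    Equiv.coe_fn_mk, Fin.ext_iff, and_comm]

end ConjugatePartition

theorem jordan_similar_weyr_general (k : ℕ) (hk : 0 < k) (m : Fin k → ℕ)
    (hmono : ∀ t u : Fin k, t ≤ u → m u ≤ m t) (s : ℕ) (hs : s = m ⟨0, hk⟩)
    (r : Fin s → ℕ)
    (hr : ∀ i : Fin s, r i = (Finset.univ.filter fun j : Fin k => (i : ℕ) < m j).card) :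
    ∃ (e : (Σ t : Fin k, Fin (m t)) ≃ (Σ i : Fin s, Fin (r i)))
      (S : (Matrix (Σ t : Fin k, Fin (m t)) (Σ t : Fin k, Fin (m t)) ℍ[ℝ])ˣ),
      jordanNilpotent m = (S⁻¹).val * ((weyrMatrix r).submatrix e e) * S.val := by
  have hm : Antitone m := fun t u htu => hmono t u htu
  have hms : ∀ t, m t ≤ s := fun t => hs ▸ hm (Nat.zero_le t.val)
  refine ⟨youngDiagramTranspose hm hms r hr, 1, ?_⟩
  rw [inv_one, Units.val_one, Matrix.one_mul, Matrix.mul_one,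
    weyrMatrix_submatrix_youngDiagramTranspose]

/-- **Lemma 2.1.** Let `m 0 ≥ m 1 ≥ ⋯ ≥ m (k-1)` be positive integers, `s = m 0`, and let
`r i` be the number of indices `j` with `m j ≥ i + 1` (the conjugate partition).  Then the
direct sum of Jordan blocks `J_{m t}(0)` is similar over `ℍ` to the block matrix `B` with
zero diagonal blocks of sizes `r i` and superdiagonal blocks `[I; 0]` (a permutation of the
index set is needed to identify the two index types). -/
theorem jordan_similar_weyr (k : ℕ) (hk : 0 < k) (m : Fin k → ℕ) (hpos : ∀ t, 0 < m t)
    (hmono : ∀ t u : Fin k, t ≤ u → m u ≤ m t) (s : ℕ) (hs : s = m ⟨0, hk⟩)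
    (r : Fin s → ℕ)
    (hr : ∀ i : Fin s, r i = (Finset.univ.filter fun j : Fin k => (i : ℕ) < m j).card) :
    ∃ (e : (Σ t : Fin k, Fin (m t)) ≃ (Σ i : Fin s, Fin (r i)))
      (S : (Matrix (Σ t : Fin k, Fin (m t)) (Σ t : Fin k, Fin (m t)) ℍ[ℝ])ˣ),
      jordanNilpotent m = (S⁻¹).val * ((weyrMatrix r).submatrix e e) * S.val :=
  jordan_similar_weyr_general k hk m hmono s hs r hr
end
end

section
/- For n×n quaternion matrices A and B, define the 3n×3n block matrices M_A = [[3I_n, I_n, A],[0, 2I_n, I_n],[0, 0, I_n]] and M_B = [[3I_n, I_n, B],[0, 2I_n, I_n],[0, 0, I_n]]. Then M_A is unitarily similar to M_B if and only if A is unitarily similar to B. Moreover, every quaternion unitary V with V*M_A V = M_B has the form V = V₁ ⊕ V₁ ⊕ V₁ for some n×n unitary V₁ satisfying V₁*AV₁ = B. -/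
open Matrix
open scoped Quaternion

noncomputable section

/-- The block matrix `M_A = [[3I, I, A],[0, 2I, I],[0, 0, I]]`, indexed by
`Fin 3 × Fin n` (first coordinate = block row/column). -/
def triBlock {n : ℕ} (A : Matrix (Fin n) (Fin n) ℍ[ℝ]) :
    Matrix (Fin 3 × Fin n) (Fin 3 × Fin n) ℍ[ℝ] :=
  fun x y =>
    let d : ℍ[ℝ] := if x.2 = y.2 then 1 else 0
    if x.1 = 0 ∧ y.1 = 0 then 3 * d
    else if x.1 = 0 ∧ y.1 = 1 then d
    else if x.1 = 0 ∧ y.1 = 2 then A x.2 y.2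
    else if x.1 = 1 ∧ y.1 = 1 then 2 * d
    else if x.1 = 1 ∧ y.1 = 2 then d
    else if x.1 = 2 ∧ y.1 = 2 then d
    else 0

/-!
Write `M_A` as the `3 × 3` matrix `[[3, 1, A], [0, 2, 1], [0, 0, 1]]` over the ring of `n × n`
quaternion matrices (`Matrix.compRingEquiv`). A unitary `V` with `Vᴴ M_A V = M_B` satisfies
`M_A V = V M_B`. Reading this entrywise below the diagonal, the distinct scalars `3, 2, 1` on the
diagonal force `V` to be block upper triangular. A unitary block upper triangular matrix over a
Dedekind-finite ring is block diagonal, and the entries above the diagonal then force the three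
diagonal blocks to be one and the same `V₁`, with `A V₁ = V₁ B`.
-/

section Ring
variable {S : Type*} [Ring S]

def triMatrix (x : S) : Matrix (Fin 3) (Fin 3) S := !![3, 1, x; 0, 2, 1; 0, 0, 1]

theorem isUpperTriangular_of_triMatrix_mul_eq [IsAddTorsionFree S] {a b : S}
    {W : Matrix (Fin 3) (Fin 3) S} (h : triMatrix a * W = W * triMatrix b) :
    W.IsUpperTriangular := by
  have e := congr_fun₂ h
  have e20 : W 2 0 = W 2 0 * 3 := by simpa [triMatrix, mul_apply, Fin.sum_univ_three] using e 2 0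
  have e10 : 2 * W 1 0 + W 2 0 = W 1 0 * 3 := by
    simpa [triMatrix, mul_apply, Fin.sum_univ_three] using e 1 0
  have e21 : W 2 1 = W 2 0 + W 2 1 * 2 := by
    simpa [triMatrix, mul_apply, Fin.sum_univ_three] using e 2 1
  -- `W 2 0 = W 2 0 * 3` only yields `2 • W 2 0 = 0`; this is where torsion-freeness enters.
  have h20 : W 2 0 = 0 := by
    have : (2 : ℕ) • W 2 0 = 0 := by
      calc (2 : ℕ) • W 2 0 = W 2 0 * 3 - W 2 0 := by noncomm_ring
        _ = 0 := by rw [← e20, sub_self]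
    exact (smul_eq_zero.mp this).resolve_left two_ne_zero
  have h10 : W 1 0 = 0 :=
    calc W 1 0 = W 1 0 * 3 - (2 * W 1 0 + W 2 0) := by rw [h20]; noncomm_ring
      _ = 0 := by rw [e10, sub_self]
  have h21 : W 2 1 = 0 :=
    calc W 2 1 = W 2 0 + W 2 1 * 2 - W 2 1 := by rw [h20]; noncomm_ring
      _ = 0 := by rw [← e21, sub_self]
  intro i j hij
  fin_cases i <;> fin_cases j <;> simp_all

theorem eq_zero_of_star_mul_eq_zero [StarMul S] [IsDedekindFiniteMonoid S] {u x : S}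
    (hu : star u * u = 1) (h : star u * x = 0) : x = 0 :=
  calc x = u * star u * x := by rw [mul_eq_one_comm.mp hu, one_mul]
    _ = 0 := by rw [mul_assoc, h, mul_zero]

theorem isDiag_of_isUpperTriangular_of_conjTranspose_mul_self [StarRing S]
    [IsDedekindFiniteMonoid S] {W : Matrix (Fin 3) (Fin 3) S} (hW : W.IsUpperTriangular)
    (hu : Wᴴ * W = 1) : W.IsDiag := by
  have h10 : W 1 0 = 0 := hW (by decide)
  have h20 : W 2 0 = 0 := hW (by decide)
  have h21 : W 2 1 = 0 := hW (by decide)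
  have e := congr_fun₂ hu
  have u00 : star (W 0 0) * W 0 0 = 1 := by
    simpa [mul_apply, Fin.sum_univ_three, h10, h20] using e 0 0
  have h01 : W 0 1 = 0 := eq_zero_of_star_mul_eq_zero u00 <| by
    simpa [mul_apply, Fin.sum_univ_three, h10, h20] using e 0 1
  have h02 : W 0 2 = 0 := eq_zero_of_star_mul_eq_zero u00 <| by
    simpa [mul_apply, Fin.sum_univ_three, h10, h20] using e 0 2
  have u11 : star (W 1 1) * W 1 1 = 1 := by
    simpa [mul_apply, Fin.sum_univ_three, h01, h21] using e 1 1
  have h12 : W 1 2 = 0 := eq_zero_of_star_mul_eq_zero u11 <| by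
    simpa [mul_apply, Fin.sum_univ_three, h01, h21] using e 1 2
  intro i j hij
  fin_cases i <;> fin_cases j <;> simp_all

theorem eq_const_of_triMatrix_mul_diagonal {a b : S} {d : Fin 3 → S}
    (h : triMatrix a * diagonal d = diagonal d * triMatrix b) :
    d = (fun _ => d 0) ∧ a * d 0 = d 0 * b := by
  have e := congr_fun₂ h
  have e01 : d 1 = d 0 := by simpa [triMatrix, mul_apply, Fin.sum_univ_three] using e 0 1
  have e12 : d 2 = d 1 := by simpa [triMatrix, mul_apply, Fin.sum_univ_three] using e 1 2
  have e02 : a * d 2 = d 0 * b := by simpa [triMatrix, mul_apply, Fin.sum_univ_three] using e 0 2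
  refine ⟨funext fun i => ?_, by rwa [e12, e01] at e02⟩
  fin_cases i <;> simp [e01, e12]

theorem exists_eq_diagonal_of_triMatrix_mul_eq [StarRing S] [IsDedekindFiniteMonoid S] [IsAddTorsionFree S]
    {a b : S} {W : Matrix (Fin 3) (Fin 3) S} (hu : Wᴴ * W = 1)
    (h : triMatrix a * W = W * triMatrix b) :
    ∃ u : S, star u * u = 1 ∧ a * u = u * b ∧ W = diagonal fun _ => u := by
  have hdiag := isDiag_of_isUpperTriangular_of_conjTranspose_mul_self
    (isUpperTriangular_of_triMatrix_mul_eq h) hu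
  rw [← hdiag.diagonal_diag] at h hu ⊢
  obtain ⟨hconst, hab⟩ := eq_const_of_triMatrix_mul_diagonal h
  refine ⟨W 0 0, ?_, hab, by rw [hconst]; rfl⟩
  simpa [diagonal_conjTranspose] using congrFun (congrFun hu 0) 0

theorem diagonal_star_mul_triMatrix_mul_diagonal [StarMul S] {u b : S} (hu : star u * u = 1) :
    diagonal (fun _ => star u) * triMatrix b * diagonal (fun _ => u) =
      triMatrix (star u * b * u) := by
  ext i j
  fin_cases i <;> fin_cases j <;>
    simp [triMatrix, hu, (Commute.ofNat_right (star u) 3).eq, (Commute.ofNat_right (star u) 2).eq,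
      mul_assoc]

end Ring

section Blocks
variable {I J R : Type*} [Fintype I] [Fintype J]

@[simp]
theorem compRingEquiv_apply_apply [AddCommMonoid R] [Mul R] (M : Matrix I I (Matrix J J R))
    (x y : I × J) : compRingEquiv I J R M x y = M x.1 y.1 x.2 y.2 :=
  rfl

theorem conjTranspose_compRingEquiv [AddCommMonoid R] [Mul R] [Star R]
    (M : Matrix I I (Matrix J J R)) : (compRingEquiv I J R M)ᴴ = compRingEquiv I J R Mᴴ :=
  rfl

theorem compRingEquiv_diagonal_const [DecidableEq I] [AddCommMonoid R] [Mul R] (U : Matrix J J R) :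
    compRingEquiv I J R (diagonal fun _ => U) =
      fun x y => if x.1 = y.1 then U x.2 y.2 else 0 := by
  funext x y
  by_cases h : x.1 = y.1 <;> simp [h]

theorem isUnitaryM_compRingEquiv_iff [DecidableEq I] [DecidableEq J]
    (W : Matrix I I (Matrix J J ℍ[ℝ])) :
    IsUnitaryM (compRingEquiv I J ℍ[ℝ] W) ↔ Wᴴ * W = 1 := by
  rw [IsUnitaryM, conjTranspose_compRingEquiv, ← map_mul, ← map_one (compRingEquiv I J ℍ[ℝ]),
    EquivLike.apply_eq_iff_eq]

end Blocks

theorem triBlock_eq_compRingEquiv {n : ℕ} (A : Matrix (Fin n) (Fin n) ℍ[ℝ]) :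
    triBlock A = compRingEquiv (Fin 3) (Fin n) ℍ[ℝ] (triMatrix A) := by
  funext ⟨p, i⟩ ⟨q, j⟩
  rw [compRingEquiv_apply_apply]
  -- Settle the block indices first: a plain `simp` chokes on the dead branches `A x.2 y.2`.
  fin_cases p <;> fin_cases q <;>
    simp only [triBlock, triMatrix, of_apply, cons_val', cons_val_zero, cons_val_one, cons_val_two,
      cons_val_fin_one, Fin.zero_eta, Fin.mk_one, Fin.reduceFinMk, Fin.reduceEq, and_true,
      and_false, ↓reduceIte] <;>
    simp [ofNat_apply, one_apply]

theorem exists_blockDiag_of_conjTranspose_mul_triBlock_mul {n : ℕ}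
    {A B : Matrix (Fin n) (Fin n) ℍ[ℝ]} {V : Matrix (Fin 3 × Fin n) (Fin 3 × Fin n) ℍ[ℝ]}
    (hV : IsUnitaryM V) (hsim : Vᴴ * triBlock A * V = triBlock B) :
    ∃ V₁ : Matrix (Fin n) (Fin n) ℍ[ℝ], IsUnitaryM V₁ ∧ V₁ᴴ * A * V₁ = B ∧
      V = fun x y => if x.1 = y.1 then V₁ x.2 y.2 else 0 := by
  have hcomm : triBlock A * V = V * triBlock B := by
    rw [← hsim, ← mul_assoc, ← mul_assoc, mul_eq_one_comm.mp hV, one_mul]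
  obtain ⟨W, rfl⟩ := (compRingEquiv (Fin 3) (Fin n) ℍ[ℝ]).surjective V
  rw [triBlock_eq_compRingEquiv, triBlock_eq_compRingEquiv, ← map_mul, ← map_mul,
    EquivLike.apply_eq_iff_eq] at hcomm
  have := IsAddTorsionFree.of_module_rat (Matrix (Fin n) (Fin n) ℍ[ℝ])
  obtain ⟨U, hU, hAB, rfl⟩ :=
    exists_eq_diagonal_of_triMatrix_mul_eq ((isUnitaryM_compRingEquiv_iff W).mp hV) hcomm
  refine ⟨U, hU, ?_, compRingEquiv_diagonal_const U⟩
  rw [mul_assoc, hAB, ← mul_assoc, ← star_eq_conjTranspose, hU, one_mul]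

theorem unitarilySimilar_triBlock {n : ℕ} {A B : Matrix (Fin n) (Fin n) ℍ[ℝ]}
    (h : UnitarilySimilar A B) : UnitarilySimilar (triBlock A) (triBlock B) := by
  obtain ⟨U, hU, rfl⟩ := h
  refine ⟨compRingEquiv (Fin 3) (Fin n) ℍ[ℝ] (diagonal fun _ => U), ?_, ?_⟩
  · rw [isUnitaryM_compRingEquiv_iff, diagonal_conjTranspose, diagonal_mul_diagonal]
    exact diagonal_eq_one.mpr (funext fun _ => hU)
  · rw [triBlock_eq_compRingEquiv, triBlock_eq_compRingEquiv, conjTranspose_compRingEquiv,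
      ← map_mul, ← map_mul, diagonal_conjTranspose]
    exact congrArg _ (diagonal_star_mul_triMatrix_mul_diagonal hU).symm

/-- `M_A` and `M_B` are unitarily similar iff `A` and `B` are; moreover every unitary `V`
with `Vᴴ M_A V = M_B` is of the form `V = V₁ ⊕ V₁ ⊕ V₁` with `V₁` unitary and
`V₁ᴴ A V₁ = B`. -/
theorem triBlock_unitarily_similar_iff {n : ℕ} (A B : Matrix (Fin n) (Fin n) ℍ[ℝ]) :
    (UnitarilySimilar (triBlock A) (triBlock B) ↔ UnitarilySimilar A B) ∧
    (∀ V : Matrix (Fin 3 × Fin n) (Fin 3 × Fin n) ℍ[ℝ], IsUnitaryM V →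
      Vᴴ * triBlock A * V = triBlock B →
      ∃ V₁ : Matrix (Fin n) (Fin n) ℍ[ℝ], IsUnitaryM V₁ ∧ V₁ᴴ * A * V₁ = B ∧
        V = fun x y => if x.1 = y.1 then V₁ x.2 y.2 else 0) := by
  refine ⟨⟨fun ⟨V, hV, hsim⟩ => ?_, unitarilySimilar_triBlock⟩,
    fun V hV hsim => exists_blockDiag_of_conjTranspose_mul_triBlock_mul hV hsim⟩
  · obtain ⟨V₁, hV₁, hBA, -⟩ := exists_blockDiag_of_conjTranspose_mul_triBlock_mul hV hsim.symm
    exact ⟨V₁, hV₁, hBA.symm⟩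
end
end
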